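/- arXiv:1606.00778 — 4 statements merged into one kernel-verified Lean document; each statement's English description precedes it below -/
import Mathlib

section
/- For every symmetric traceless 3×3 real matrix A with tr(A²) = 1, there exist g ∈ SO(3) and a unique r ∈ [0, π/3] such that g A gᵀ = γ(r). -/
open Real Matrix

/-- The horizontal geodesic `γ(r)` in the space of symmetric traceless 3×3 matrices. -/
noncomputable def gzGeodesic (r : ℝ) : Matrix (Fin 3) (Fin 3) ℝ :=
  Matrix.diagonal ![cos r / Real.sqrt 6 + sin r / Real.sqrt 2,
                    cos r / Real.sqrt 6 - sin r / Real.sqrt 2,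
                    -2 * cos r / Real.sqrt 6]

lemma gz_trace_cube (r : ℝ) :
    (gzGeodesic r * gzGeodesic r * gzGeodesic r).trace = -Real.cos (3 * r) / Real.sqrt 6 := by
  have h6 : Real.sqrt 6 * Real.sqrt 6 = 6 := Real.mul_self_sqrt (by norm_num)
  have h2 : Real.sqrt 2 * Real.sqrt 2 = 2 := Real.mul_self_sqrt (by norm_num)
  have h6ne : Real.sqrt 6 ≠ 0 := by positivity
  have h2ne : Real.sqrt 2 ≠ 0 := by positivity
  have hs : sin r ^ 2 = 1 - cos r ^ 2 := Real.sin_sq r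
  rw [gzGeodesic, diagonal_mul_diagonal, diagonal_mul_diagonal, trace_diagonal,
    Fin.sum_univ_three, Real.cos_three_mul]
  simp only [Pi.mul_apply, Matrix.cons_val_zero, Matrix.cons_val_one, Matrix.head_cons,
    Matrix.cons_val_two, Matrix.tail_cons]
  field_simp
  ring_nf
  have e6 : Real.sqrt 6 ^ 2 = 6 := Real.sq_sqrt (by norm_num)
  have e23 : Real.sqrt 2 ^ 3 = 2 * Real.sqrt 2 := by
    rw [pow_succ, Real.sq_sqrt (by norm_num)]
  rw [e6, e23]
  linear_combination (36 * Real.cos r * Real.sqrt 2) * hs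

lemma gz_conj_mul {g A B : Matrix (Fin 3) (Fin 3) ℝ} (hg : gᵀ * g = 1) :
    (g * A * gᵀ) * (g * B * gᵀ) = g * (A * B) * gᵀ := by
  calc (g * A * gᵀ) * (g * B * gᵀ) = g * (A * ((gᵀ * g) * (B * gᵀ))) := by
        simp only [Matrix.mul_assoc]
    _ = g * (A * B) * gᵀ := by rw [hg, Matrix.one_mul]; simp only [Matrix.mul_assoc]

lemma gz_trace_conj {g A : Matrix (Fin 3) (Fin 3) ℝ} (hg : gᵀ * g = 1) :
    (g * A * gᵀ).trace = A.trace := by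
  rw [Matrix.trace_mul_cycle, hg, Matrix.one_mul]

lemma gz_trace_cube_conj {g A : Matrix (Fin 3) (Fin 3) ℝ} (hg : g * gᵀ = 1) :
    ((g * A * gᵀ) * (g * A * gᵀ) * (g * A * gᵀ)).trace = (A * A * A).trace := by
  have hg' : gᵀ * g = 1 := mul_eq_one_comm.mp hg
  rw [gz_conj_mul hg', gz_conj_mul hg', gz_trace_conj hg']

lemma gz_perm_transpose (σ : Equiv.Perm (Fin 3)) :
    (σ.permMatrix ℝ)ᵀ = (σ⁻¹).permMatrix ℝ := by
  rw [← PEquiv.toMatrix_symm, ← Equiv.toPEquiv_symm]; rfl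

lemma gz_perm_orth (σ : Equiv.Perm (Fin 3)) : (σ.permMatrix ℝ) * (σ.permMatrix ℝ)ᵀ = 1 := by
  rw [← PEquiv.toMatrix_symm, ← Equiv.toPEquiv_symm, ← PEquiv.toMatrix_trans,
    ← Equiv.toPEquiv_trans]
  simp

lemma gz_perm_conj (σ : Equiv.Perm (Fin 3)) (v : Fin 3 → ℝ) :
    (σ.permMatrix ℝ) * diagonal v * (σ.permMatrix ℝ)ᵀ = diagonal (v ∘ σ) := by
  rw [← PEquiv.toMatrix_symm, ← Equiv.toPEquiv_symm, PEquiv.toMatrix_toPEquiv_mul,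
    PEquiv.mul_toMatrix_toPEquiv]
  ext i j
  simp [Matrix.diagonal_apply, Matrix.submatrix_apply, Equiv.symm_symm]

/-- For any `s ∈ [0, π/3]` such that `A` is conjugate to `γ(s)`, `cos (3 s)` is
determined by `tr (A³)`. -/
lemma gz_cos_det {A : Matrix (Fin 3) (Fin 3) ℝ} {s : ℝ}
    (h : ∃ g : Matrix (Fin 3) (Fin 3) ℝ, g * gᵀ = 1 ∧ g.det = 1 ∧ g * A * gᵀ = gzGeodesic s) :
    Real.cos (3 * s) = -Real.sqrt 6 * (A * A * A).trace := by
  obtain ⟨g, hg, -, hgA⟩ := h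
  have h6 : Real.sqrt 6 * Real.sqrt 6 = 6 := Real.mul_self_sqrt (by norm_num)
  have h6ne : Real.sqrt 6 ≠ 0 := by positivity
  have := gz_trace_cube_conj (A := A) hg
  rw [hgA, gz_trace_cube] at this
  field_simp at this
  linarith [this]

set_option maxHeartbeats 2000000 in
/-- every unit-norm symmetric traceless 3×3 real matrix is conjugate
under `SO(3)` to `γ(r)` for a unique `r ∈ [0, π/3]`. -/
theorem stmt_3 (A : Matrix (Fin 3) (Fin 3) ℝ)
    (hsym : Aᵀ = A) (htr : A.trace = 0) (hnorm : (A * A).trace = 1) :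
    ∃! r : ℝ, r ∈ Set.Icc (0 : ℝ) (π / 3) ∧
      ∃ g : Matrix (Fin 3) (Fin 3) ℝ, g * gᵀ = 1 ∧ g.det = 1 ∧ g * A * gᵀ = gzGeodesic r := by
  -- Diagonalize A
  have hA : A.IsHermitian := by
    rwa [Matrix.IsHermitian, Matrix.conjTranspose_eq_transpose_of_trivial]
  set U : Matrix (Fin 3) (Fin 3) ℝ := (hA.eigenvectorUnitary : Matrix (Fin 3) (Fin 3) ℝ) with hUdef
  set lam : Fin 3 → ℝ := hA.eigenvalues with hlamdef
  have hspec : A = U * diagonal lam * star U := by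
    have := hA.spectral_theorem; simpa using this
  have hstar : star U = Uᵀ := by
    rw [Matrix.star_eq_conjTranspose, Matrix.conjTranspose_eq_transpose_of_trivial]
  have hU1 : U * Uᵀ = 1 := by
    have := (Matrix.mem_unitaryGroup_iff).mp hA.eigenvectorUnitary.2
    rwa [hstar] at this
  have hU2 : Uᵀ * U = 1 := mul_eq_one_comm.mp hU1
  have hdiag : Uᵀ * A * U = diagonal lam := by
    rw [hspec, hstar]
    calc Uᵀ * (U * diagonal lam * Uᵀ) * U
        = (Uᵀ * U) * diagonal lam * (Uᵀ * U) := by simp only [Matrix.mul_assoc]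
      _ = diagonal lam := by rw [hU2]; simp
  -- Sort eigenvalues in decreasing order
  set σ : Equiv.Perm (Fin 3) := Tuple.sort lam * Fin.revPerm with hσdef
  set w : Fin 3 → ℝ := lam ∘ σ with hwdef
  have hw01 : w 1 ≤ w 0 := by
    have := Tuple.monotone_sort lam (a := 1) (b := 2) (by decide)
    simpa [hwdef, hσdef, Equiv.Perm.mul_apply, Function.comp, show Fin.rev (0:Fin 3) = 2 by decide,
      show Fin.rev (1:Fin 3) = 1 by decide] using this
  have hw12 : w 2 ≤ w 1 := by
    have := Tuple.monotone_sort lam (a := 0) (b := 1) (by decide)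
    simpa [hwdef, hσdef, Equiv.Perm.mul_apply, Function.comp, show Fin.rev (1:Fin 3) = 1 by decide,
      show Fin.rev (2:Fin 3) = 0 by decide] using this
  set P : Matrix (Fin 3) (Fin 3) ℝ := σ.permMatrix ℝ with hPdef
  set g0 : Matrix (Fin 3) (Fin 3) ℝ := P * Uᵀ with hg0def
  have hg0orth : g0 * g0ᵀ = 1 := by
    rw [hg0def, Matrix.transpose_mul, Matrix.transpose_transpose]
    calc P * Uᵀ * (U * Pᵀ) = P * (Uᵀ * U) * Pᵀ := by simp only [Matrix.mul_assoc]
      _ = 1 := by rw [hU2]; rw [Matrix.mul_one]; exact gz_perm_orth σ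
  have hg0A : g0 * A * g0ᵀ = diagonal w := by
    rw [hg0def, Matrix.transpose_mul, Matrix.transpose_transpose]
    calc P * Uᵀ * A * (U * Pᵀ) = P * (Uᵀ * A * U) * Pᵀ := by simp only [Matrix.mul_assoc]
      _ = P * diagonal lam * Pᵀ := by rw [hdiag]
      _ = diagonal w := gz_perm_conj σ lam
  -- trace identities for w
  have hsum : w 0 + w 1 + w 2 = 0 := by
    have h := gz_trace_conj (A := A) (mul_eq_one_comm.mp hg0orth)
    rw [hg0A, htr, trace_diagonal, Fin.sum_univ_three] at h
    linarith
  have hsumsq : w 0 ^ 2 + w 1 ^ 2 + w 2 ^ 2 = 1 := by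
    have h := gz_conj_mul (g := g0) (A := A) (B := A) (mul_eq_one_comm.mp hg0orth)
    have h2 : (diagonal w * diagonal w).trace = (A * A).trace := by
      rw [← hg0A, h, gz_trace_conj (mul_eq_one_comm.mp hg0orth)]
    rw [hnorm, diagonal_mul_diagonal, trace_diagonal, Fin.sum_univ_three] at h2
    simpa [Pi.mul_apply, sq] using h2
  -- numeric setup
  have h6 : Real.sqrt 6 * Real.sqrt 6 = 6 := Real.mul_self_sqrt (by norm_num)
  have h2 : Real.sqrt 2 * Real.sqrt 2 = 2 := Real.mul_self_sqrt (by norm_num)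
  have h6pos : (0:ℝ) < Real.sqrt 6 := Real.sqrt_pos.2 (by norm_num)
  have h2pos : (0:ℝ) < Real.sqrt 2 := Real.sqrt_pos.2 (by norm_num)
  set x : ℝ := -Real.sqrt 6 * w 2 / 2 with hxdef
  have ha0 : w 2 ≤ 0 := by nlinarith
  have hasq : 1 / 6 ≤ w 2 ^ 2 := by nlinarith [sq_nonneg (w 0 - w 1), sq_nonneg (w 0 + w 1)]
  have hasq' : w 2 ^ 2 ≤ 2 / 3 := by nlinarith [sq_nonneg (w 0 - w 1), sq_nonneg (w 0 + w 1)]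
  have hx_half : 1 / 2 ≤ x := by
    rw [hxdef]
    nlinarith [mul_nonneg h6pos.le (neg_nonneg.mpr ha0), sq_nonneg (Real.sqrt 6 * w 2 + 1)]
  have hx_one : x ≤ 1 := by
    rw [hxdef]
    nlinarith [mul_nonneg h6pos.le (neg_nonneg.mpr ha0), sq_nonneg (Real.sqrt 6 * w 2 - 2),
      sq_nonneg (Real.sqrt 6 * w 2 + 2)]
  set r : ℝ := Real.arccos x with hrdef
  have hr0 : 0 ≤ r := Real.arccos_nonneg x
  have hrpi3 : r ≤ π / 3 := by
    by_contra hcon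
    push_neg at hcon
    have h1 : Real.cos r < Real.cos (π / 3) :=
      Real.cos_lt_cos_of_nonneg_of_le_pi (by positivity) (Real.arccos_le_pi x) hcon
    rw [Real.cos_pi_div_three, Real.cos_arccos (by linarith) hx_one] at h1
    linarith
  have hcosr : Real.cos r = x := Real.cos_arccos (by linarith) hx_one
  have h6ne : Real.sqrt 6 ≠ 0 := h6pos.ne'
  have h2ne : Real.sqrt 2 ≠ 0 := h2pos.ne'
  have hsinr : Real.sin r = (w 0 - w 1) / Real.sqrt 2 := by
    rw [hrdef, Real.sin_arccos]
    have hd : (w 0 - w 1) ^ 2 = 2 - 3 * w 2 ^ 2 := by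
      linear_combination 2 * hsumsq + (w 2 - w 1 - w 0) * hsum
    have hx2 : x ^ 2 = 3 / 2 * w 2 ^ 2 := by
      rw [hxdef, show (-Real.sqrt 6 * w 2 / 2) ^ 2
        = Real.sqrt 6 * Real.sqrt 6 * w 2 ^ 2 / 4 from by ring, h6]
      ring
    have hq2 : ((w 0 - w 1) / Real.sqrt 2) ^ 2 = (w 0 - w 1) ^ 2 / 2 := by
      rw [show ((w 0 - w 1) / Real.sqrt 2) ^ 2
        = (w 0 - w 1) ^ 2 / (Real.sqrt 2 * Real.sqrt 2) from by ring, h2]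
    have key : 1 - x ^ 2 = ((w 0 - w 1) / Real.sqrt 2) ^ 2 := by
      rw [hx2, hq2, hd]; ring
    rw [key, Real.sqrt_sq (div_nonneg (by linarith) h2pos.le)]
  -- entries of the geodesic
  have e1 : Real.cos r / Real.sqrt 6 = -(w 2) / 2 := by
    rw [hcosr, hxdef]
    field_simp
  have e2 : Real.sin r / Real.sqrt 2 = (w 0 - w 1) / 2 := by
    rw [hsinr, div_div, h2]
  have hE0 : Real.cos r / Real.sqrt 6 + Real.sin r / Real.sqrt 2 = w 0 := by
    rw [e1, e2]; linarith
  have hE1 : Real.cos r / Real.sqrt 6 - Real.sin r / Real.sqrt 2 = w 1 := by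
    rw [e1, e2]; linarith
  have hE2 : -2 * Real.cos r / Real.sqrt 6 = w 2 := by
    rw [show -2 * Real.cos r / Real.sqrt 6 = -2 * (Real.cos r / Real.sqrt 6) from by ring, e1]
    ring
  have hvec : ![Real.cos r / Real.sqrt 6 + Real.sin r / Real.sqrt 2,
      Real.cos r / Real.sqrt 6 - Real.sin r / Real.sqrt 2,
      -2 * Real.cos r / Real.sqrt 6] = w := by
    funext i
    fin_cases i
    · exact hE0
    · exact hE1
    · exact hE2
  have hgeo : gzGeodesic r = diagonal w := by rw [gzGeodesic, hvec]
  -- fix the determinant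
  have hdet0 : g0.det = 1 ∨ g0.det = -1 := by
    have : g0.det * g0.det = 1 := by
      have := congrArg Matrix.det hg0orth
      rwa [Matrix.det_mul, Matrix.det_transpose, Matrix.det_one] at this
    rcases mul_self_eq_one_iff.mp this with h | h
    · exact Or.inl h
    · exact Or.inr h
  have hexists : ∃ g : Matrix (Fin 3) (Fin 3) ℝ,
      g * gᵀ = 1 ∧ g.det = 1 ∧ g * A * gᵀ = gzGeodesic r := by
    rcases hdet0 with hd | hd
    · exact ⟨g0, hg0orth, hd, by rw [hg0A, hgeo]⟩
    · set D : Matrix (Fin 3) (Fin 3) ℝ := diagonal ![-1, 1, 1] with hDdef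
      have hDT : Dᵀ = D := Matrix.diagonal_transpose _
      have hDD : D * D = 1 := by
        rw [hDdef, diagonal_mul_diagonal]
        have hv : (fun i => ![(-1:ℝ), 1, 1] i * ![(-1:ℝ), 1, 1] i) = fun _ => (1:ℝ) := by
          funext i
          fin_cases i <;> norm_num
        rw [hv]
        exact Matrix.diagonal_one
      refine ⟨D * g0, ?_, ?_, ?_⟩
      · rw [Matrix.transpose_mul, hDT]
        calc D * g0 * (g0ᵀ * D) = D * (g0 * g0ᵀ) * D := by simp only [Matrix.mul_assoc]
          _ = 1 := by rw [hg0orth, Matrix.mul_one, hDD]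
      · rw [Matrix.det_mul, hd, hDdef, Matrix.det_diagonal, Fin.prod_univ_three]
        norm_num
        rfl
      · rw [Matrix.transpose_mul, hDT]
        calc D * g0 * A * (g0ᵀ * D) = D * (g0 * A * g0ᵀ) * D := by simp only [Matrix.mul_assoc]
          _ = D * diagonal w * D := by rw [hg0A]
          _ = gzGeodesic r := by
              rw [hgeo, hDdef, diagonal_mul_diagonal, diagonal_mul_diagonal]
              apply congrArg Matrix.diagonal
              funext i
              fin_cases i <;> simp
  -- uniqueness
  refine ⟨r, ⟨⟨hr0, hrpi3⟩, hexists⟩, ?_⟩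
  rintro s ⟨⟨hs0, hs3⟩, hsex⟩
  have hc1 := gz_cos_det hsex
  have hc2 := gz_cos_det hexists
  have hcc : Real.cos (3 * s) = Real.cos (3 * r) := by rw [hc1, hc2]
  have hpi : (0:ℝ) < π := Real.pi_pos
  have h3 : 3 * s = 3 * r :=
    Real.injOn_cos ⟨by linarith, by linarith⟩ ⟨by linarith, by linarith⟩ hcc
  linarith
end

section
/- The SO(3)-orbit of the point [1 : i : 0] ∈ ℙ(ℂ³) equals the quadric {[z₀ : z₁ : z₂] ∈ ℙ(ℂ³) : z₀² + z₁² + z₂² = 0}; that is, {[g·(1, i, 0)] : g ∈ SO(3)} = {[z] : z ∈ ℂ³ \ {0}, z₀² + z₁² + z₂² = 0}. -/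
open Matrix

set_option maxHeartbeats 1600000 in
/-- the `SO(3)`-orbit of `[1 : i : 0] ∈ ℙ(ℂ³)` is the quadric
`{[z₀:z₁:z₂] : z₀² + z₁² + z₂² = 0}`. -/
theorem stmt_9 :
    {P : Projectivization ℂ (Fin 3 → ℂ) |
      ∃ (g : Matrix (Fin 3) (Fin 3) ℝ) (_ : g * gᵀ = 1) (_ : g.det = 1)
        (h : (g.map (fun x : ℝ => (x : ℂ))).mulVec ![1, Complex.I, 0] ≠ 0),
        P = Projectivization.mk ℂ
          ((g.map (fun x : ℝ => (x : ℂ))).mulVec ![1, Complex.I, 0]) h} =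
    {P : Projectivization ℂ (Fin 3 → ℂ) |
      ∃ (z : Fin 3 → ℂ) (hz : z ≠ 0),
        z 0 ^ 2 + z 1 ^ 2 + z 2 ^ 2 = 0 ∧ P = Projectivization.mk ℂ z hz} := by
  ext P
  simp only [Set.mem_setOf_eq]
  constructor
  · rintro ⟨g, hg, hdet, h, rfl⟩
    refine ⟨_, h, ?_, rfl⟩
    have hg' : gᵀ * g = 1 := mul_eq_one_comm.mp hg
    have e00 := congrFun (congrFun hg' 0) 0
    have e11 := congrFun (congrFun hg' 1) 1
    have e01 := congrFun (congrFun hg' 0) 1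
    simp [Matrix.mul_apply, Fin.sum_univ_three, Matrix.one_apply, Matrix.transpose_apply] at e00 e11 e01
    have e00C : (g 0 0 : ℂ) * g 0 0 + g 1 0 * g 1 0 + g 2 0 * g 2 0 = 1 := by
      exact_mod_cast congrArg (fun t : ℝ => (t : ℂ)) e00
    have e11C : (g 0 1 : ℂ) * g 0 1 + g 1 1 * g 1 1 + g 2 1 * g 2 1 = 1 := by
      exact_mod_cast congrArg (fun t : ℝ => (t : ℂ)) e11
    have e01C : (g 0 0 : ℂ) * g 0 1 + g 1 0 * g 1 1 + g 2 0 * g 2 1 = 0 := by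
      exact_mod_cast congrArg (fun t : ℝ => (t : ℂ)) e01
    simp only [Matrix.mulVec, dotProduct, Fin.sum_univ_three, Matrix.map_apply,
      Matrix.cons_val_zero, Matrix.cons_val_one, Matrix.head_cons,
      Matrix.cons_val_two, Matrix.tail_cons]
    have hI : Complex.I ^ 2 = -1 := Complex.I_sq
    linear_combination e00C + (2 * Complex.I) * e01C + Complex.I ^ 2 * e11C + hI
  · rintro ⟨z, hz, hq, rfl⟩
    set x : Fin 3 → ℝ := fun i => (z i).re with hxdef
    set y : Fin 3 → ℝ := fun i => (z i).im with hydef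
    have hre : x 0 ^ 2 - y 0 ^ 2 + (x 1 ^ 2 - y 1 ^ 2) + (x 2 ^ 2 - y 2 ^ 2) = 0 := by
      have := congrArg Complex.re hq
      simp [Complex.add_re, Complex.sq_norm, pow_two, Complex.mul_re, hxdef, hydef] at this
      linarith [this]
    have him : x 0 * y 0 + x 1 * y 1 + x 2 * y 2 = 0 := by
      have := congrArg Complex.im hq
      simp [Complex.add_im, pow_two, Complex.mul_im, hxdef, hydef] at this
      linarith [this]
    have hxpos : 0 < x 0 ^ 2 + x 1 ^ 2 + x 2 ^ 2 := by
      rcases lt_or_eq_of_le (by positivity : (0:ℝ) ≤ x 0 ^ 2 + x 1 ^ 2 + x 2 ^ 2) with h | h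
      · exact h
      · exfalso
        have hx0 : x 0 = 0 ∧ x 1 = 0 ∧ x 2 = 0 := by
          constructor
          · nlinarith [sq_nonneg (x 1), sq_nonneg (x 2)]
          constructor
          · nlinarith [sq_nonneg (x 0), sq_nonneg (x 2)]
          · nlinarith [sq_nonneg (x 0), sq_nonneg (x 1)]
        have hy0 : y 0 = 0 ∧ y 1 = 0 ∧ y 2 = 0 := by
          obtain ⟨a, b, c⟩ := hx0
          rw [a, b, c] at hre
          constructor
          · nlinarith [sq_nonneg (y 1), sq_nonneg (y 2)]
          constructor
          · nlinarith [sq_nonneg (y 0), sq_nonneg (y 2)]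
          · nlinarith [sq_nonneg (y 0), sq_nonneg (y 1)]
        apply hz
        funext i
        fin_cases i <;>
          exact Complex.ext (by simp [hx0.1, hx0.2.1, hx0.2.2, hxdef] at *; tauto)
            (by simp [hy0.1, hy0.2.1, hy0.2.2, hydef] at *; tauto)
    set r : ℝ := Real.sqrt (x 0 ^ 2 + x 1 ^ 2 + x 2 ^ 2) with hrdef
    have hrpos : 0 < r := Real.sqrt_pos.mpr hxpos
    have hr2 : r ^ 2 = x 0 ^ 2 + x 1 ^ 2 + x 2 ^ 2 := Real.sq_sqrt hxpos.le
    set a : Fin 3 → ℝ := fun i => x i / r with hadef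
    set b : Fin 3 → ℝ := fun i => y i / r with hbdef
    have hxa : ∀ i, x i = r * a i := fun i => by
      simp only [hadef]
      field_simp [ne_of_gt hrpos]
    have hyb : ∀ i, y i = r * b i := fun i => by
      simp only [hbdef]
      field_simp [ne_of_gt hrpos]
    have hrne : r ≠ 0 := ne_of_gt hrpos
    have h1 : a 0 ^ 2 + a 1 ^ 2 + a 2 ^ 2 = 1 := by
      simp only [hadef]
      field_simp
      linarith [hr2]
    have h2 : b 0 ^ 2 + b 1 ^ 2 + b 2 ^ 2 = 1 := by
      simp only [hbdef]
      field_simp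
      linarith [hr2, hre]
    have h3 : a 0 * b 0 + a 1 * b 1 + a 2 * b 2 = 0 := by
      simp only [hadef, hbdef]
      field_simp
      linarith [him]
    -- the orthogonal matrix: columns a, b, a × b
    set g : Matrix (Fin 3) (Fin 3) ℝ :=
      !![a 0, b 0, a 1 * b 2 - a 2 * b 1;
         a 1, b 1, a 2 * b 0 - a 0 * b 2;
         a 2, b 2, a 0 * b 1 - a 1 * b 0] with hgdef
    have hgt : gᵀ = !![a 0, a 1, a 2;
                       b 0, b 1, b 2;
                       a 1 * b 2 - a 2 * b 1, a 2 * b 0 - a 0 * b 2, a 0 * b 1 - a 1 * b 0] := by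
      rw [hgdef]
      ext i j
      fin_cases i <;> fin_cases j <;> rfl
    have k00 : a 0 * a 0 + a 1 * a 1 + a 2 * a 2 = 1 := by linear_combination h1
    have k01 : a 0 * b 0 + a 1 * b 1 + a 2 * b 2 = 0 := h3
    have k02 : a 0 * (a 1 * b 2 - a 2 * b 1) + a 1 * (a 2 * b 0 - a 0 * b 2)
        + a 2 * (a 0 * b 1 - a 1 * b 0) = 0 := by ring
    have k10 : b 0 * a 0 + b 1 * a 1 + b 2 * a 2 = 0 := by linear_combination h3
    have k11 : b 0 * b 0 + b 1 * b 1 + b 2 * b 2 = 1 := by linear_combination h2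
    have k12 : b 0 * (a 1 * b 2 - a 2 * b 1) + b 1 * (a 2 * b 0 - a 0 * b 2)
        + b 2 * (a 0 * b 1 - a 1 * b 0) = 0 := by ring
    have k20 : (a 1 * b 2 - a 2 * b 1) * a 0 + (a 2 * b 0 - a 0 * b 2) * a 1
        + (a 0 * b 1 - a 1 * b 0) * a 2 = 0 := by ring
    have k21 : (a 1 * b 2 - a 2 * b 1) * b 0 + (a 2 * b 0 - a 0 * b 2) * b 1
        + (a 0 * b 1 - a 1 * b 0) * b 2 = 0 := by ring
    have k22 : (a 1 * b 2 - a 2 * b 1) * (a 1 * b 2 - a 2 * b 1)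
        + (a 2 * b 0 - a 0 * b 2) * (a 2 * b 0 - a 0 * b 2)
        + (a 0 * b 1 - a 1 * b 0) * (a 0 * b 1 - a 1 * b 0) = 1 := by
      linear_combination (b 0 ^ 2 + b 1 ^ 2 + b 2 ^ 2) * h1 + h2
        - (a 0 * b 0 + a 1 * b 1 + a 2 * b 2) * h3
    have hgo : g * gᵀ = 1 := by
      apply mul_eq_one_comm.mp
      rw [hgt, hgdef, Matrix.mul_fin_three, Matrix.one_fin_three,
        k00, k01, k02, k10, k11, k12, k20, k21, k22]
    have hgdet : g.det = 1 := by
      rw [Matrix.det_fin_three]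
      simp only [hgdef, Matrix.cons_val', Matrix.cons_val_zero, Matrix.cons_val_one,
        Matrix.head_cons, Matrix.cons_val_two, Matrix.tail_cons, Matrix.empty_val',
        Matrix.cons_val_fin_one, Matrix.head_fin_const, Matrix.of_apply]
      linear_combination (b 0 ^ 2 + b 1 ^ 2 + b 2 ^ 2) * h1 + h2
        - (a 0 * b 0 + a 1 * b 1 + a 2 * b 2) * h3
    have hmv : ∀ i, (g.map (fun x : ℝ => (x : ℂ))).mulVec ![1, Complex.I, 0] i
        = (a i : ℂ) + (b i : ℂ) * Complex.I := by
      intro i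
      fin_cases i <;>
        simp [hgdef, Matrix.mulVec, dotProduct, Fin.sum_univ_three]
    have hzval : ∀ i, z i = (r : ℂ) * ((a i : ℂ) + (b i : ℂ) * Complex.I) := by
      intro i
      have : z i = (x i : ℂ) + (y i : ℂ) * Complex.I := (Complex.re_add_im (z i)).symm
      rw [this, hxa i, hyb i]
      push_cast
      ring
    have hne : (g.map (fun x : ℝ => (x : ℂ))).mulVec ![1, Complex.I, 0] ≠ 0 := by
      intro h0
      apply hz
      funext i
      have := congrFun h0 i
      rw [hmv i] at this
      rw [hzval i, this]
      simp
    refine ⟨g, hgo, hgdet, hne, ?_⟩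
    rw [Projectivization.mk_eq_mk_iff]
    refine ⟨Units.mk0 (r : ℂ) (by exact_mod_cast ne_of_gt hrpos), ?_⟩
    funext i
    simp only [Units.smul_def, Units.val_mk0, Pi.smul_apply, smul_eq_mul]
    rw [hmv i, ← hzval i]
end

section
/- Let z(r) = (cos r, i sin r, 0) ∈ ℂ³ and, for v ∈ ℂ³, let P_r(v) = v − Re⟨v, z(r)⟩ z(r) − Re⟨v, i z(r)⟩ (i z(r)) be the projection of v onto the real-orthogonal complement of span_ℝ{z(r), i z(r)}. Then for every r ∈ [0, π/4]: ‖P_r(E_23 z(r))‖ = sin r, ‖P_r(E_12 z(r))‖ = cos 2r, and ‖P_r(E_31 z(r))‖ = cos r, where E_jk is the 3×3 skew-symmetric matrix with +1 in entry (j,k), −1 in entry (k,j), and zeros elsewhere, acting on ℂ³ by matrix multiplication. -/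
open Matrix Real

/-- The horizontal lift `z(r) = (cos r, i sin r, 0)` to `S⁵ ⊂ ℂ³`. -/
noncomputable def hopfLift (r : ℝ) : Fin 3 → ℂ :=
  ![(Real.cos r : ℂ), Complex.I * (Real.sin r : ℂ), 0]

/-- The Hermitian inner product `⟨v,w⟩ = ∑ vₖ·conj(wₖ)` on `ℂ³`. -/
noncomputable def hermInner (v w : Fin 3 → ℂ) : ℂ :=
  ∑ k, v k * (starRingEnd ℂ) (w k)

/-- The norm associated to the Hermitian inner product on `ℂ³`. -/
noncomputable def hermNorm (v : Fin 3 → ℂ) : ℝ :=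
  Real.sqrt (hermInner v v).re

/-- `P_r(v) = v − Re⟨v, z(r)⟩ z(r) − Re⟨v, i z(r)⟩ (i z(r))`: projection onto the
real-orthogonal complement of `span_ℝ{z(r), i z(r)}`. -/
noncomputable def hopfProj (r : ℝ) (v : Fin 3 → ℂ) : Fin 3 → ℂ :=
  fun k => v k - ((hermInner v (hopfLift r)).re : ℂ) * hopfLift r k -
    ((hermInner v (fun l => Complex.I * hopfLift r l)).re : ℂ) * (Complex.I * hopfLift r k)

/-- `E₁₂ ∈ so(3)` as a complex matrix. -/
def E12c : Matrix (Fin 3) (Fin 3) ℂ := !![0, 1, 0; -1, 0, 0; 0, 0, 0]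

/-- `E₃₁ ∈ so(3)` as a complex matrix. -/
def E31c : Matrix (Fin 3) (Fin 3) ℂ := !![0, 0, -1; 0, 0, 0; 1, 0, 0]

/-- `E₂₃ ∈ so(3)` as a complex matrix. -/
def E23c : Matrix (Fin 3) (Fin 3) ℂ := !![0, 0, 0; 0, 0, 1; 0, -1, 0]

/-- the Fubini–Study lengths of the horizontal components of the
action fields along `γ(r) = [cos r : i sin r : 0]` are `sin r`, `cos 2r`, `cos r`. -/
theorem stmt_12 :
    ∀ r ∈ Set.Icc (0 : ℝ) (π / 4),
      hermNorm (hopfProj r (E23c.mulVec (hopfLift r))) = sin r ∧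
      hermNorm (hopfProj r (E12c.mulVec (hopfLift r))) = cos (2 * r) ∧
      hermNorm (hopfProj r (E31c.mulVec (hopfLift r))) = cos r := by
  intro r hr
  obtain ⟨h0, h1⟩ := hr
  have hpi := Real.pi_pos
  refine ⟨?_, ?_, ?_⟩
  · have h : (hermInner (hopfProj r (E23c.mulVec (hopfLift r)))
        (hopfProj r (E23c.mulVec (hopfLift r)))).re = sin r * sin r := by
      simp [hopfProj, hermInner, hopfLift, E23c, Matrix.mulVec, dotProduct,
        Fin.sum_univ_three, Complex.ext_iff, Complex.sin_ofReal_re, Complex.cos_ofReal_re]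
    rw [hermNorm, h, Real.sqrt_mul_self
      (Real.sin_nonneg_of_nonneg_of_le_pi h0 (by linarith))]
  · have h : (hermInner (hopfProj r (E12c.mulVec (hopfLift r)))
        (hopfProj r (E12c.mulVec (hopfLift r)))).re = cos (2 * r) * cos (2 * r) := by
      simp [hopfProj, hermInner, hopfLift, E12c, Matrix.mulVec, dotProduct,
        Fin.sum_univ_three, Complex.ext_iff, Complex.sin_ofReal_re, Complex.cos_ofReal_re,
        Matrix.vecHead, Matrix.vecTail, Real.cos_two_mul, Real.sin_sq_eq_half_sub]
      linear_combination ((2 * Real.cos r ^ 2 - 1) ^ 2 + 4 * Real.cos r ^ 2 * (Real.sin r ^ 2 - Real.cos r ^ 2)) * Real.sin_sq_add_cos_sq r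
    rw [hermNorm, h, Real.sqrt_mul_self
      (Real.cos_nonneg_of_mem_Icc ⟨by linarith, by linarith⟩)]
  · have h : (hermInner (hopfProj r (E31c.mulVec (hopfLift r)))
        (hopfProj r (E31c.mulVec (hopfLift r)))).re = cos r * cos r := by
      simp [hopfProj, hermInner, hopfLift, E31c, Matrix.mulVec, dotProduct,
        Fin.sum_univ_three, Complex.ext_iff, Complex.sin_ofReal_re, Complex.cos_ofReal_re]
    rw [hermNorm, h, Real.sqrt_mul_self
      (Real.cos_nonneg_of_mem_Icc ⟨by linarith, by linarith⟩)]
end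

section
/- Let c > 0, let ε > 0, and let ξ : ℝ → ℝ be twice continuously differentiable on [0, ε) with ξ(0) = 0, ξ′(0) > 0, ξ″(0) = 0, and ξ(r) > 0 for all r ∈ (0, ε). Define F(r) = 2((c² − ξ(r)²)² − c⁴)/(c³ ξ(r)²) on (0, ε). Then there exists δ ∈ (0, ε) such that for every r₀ ∈ (0, δ), F is twice differentiable at r₀ and −F″(r₀)/c < 0. -/
open Topology Filter


/-- with `φ(·,0) = ψ(·,0) = c` constant and `ξ` the length of the
collapsing Killing field (`ξ(0) = 0`, `ξ′(0) > 0`, `ξ″(0) = 0`, `ξ > 0` on `(0,ε)`,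
twice continuously differentiable on `[0,ε)`), the initial time-derivative
`−F″(r₀)/c` of the sectional curvature of the initially flat plane `σ` is strictly
negative for all sufficiently small `r₀ > 0`, where
`F(r) = 2((c² − ξ(r)²)² − c⁴)/(c³ ξ(r)²)`. -/
theorem stmt_15 (c ε : ℝ) (hc : 0 < c) (hε : 0 < ε) (ξ : ℝ → ℝ)
    (hξ : ContDiffOn ℝ 2 ξ (Set.Ico 0 ε))
    (h0 : ξ 0 = 0)
    (h1 : 0 < derivWithin ξ (Set.Ico 0 ε) 0)
    (h2 : derivWithin (derivWithin ξ (Set.Ico 0 ε)) (Set.Ico 0 ε) 0 = 0)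
    (hpos : ∀ r ∈ Set.Ioo 0 ε, 0 < ξ r) :
    ∃ δ, 0 < δ ∧ δ < ε ∧ ∀ r₀ ∈ Set.Ioo (0 : ℝ) δ,
      DifferentiableAt ℝ
        (fun s => 2 * ((c ^ 2 - ξ s ^ 2) ^ 2 - c ^ 4) / (c ^ 3 * ξ s ^ 2)) r₀ ∧
      DifferentiableAt ℝ
        (deriv fun s => 2 * ((c ^ 2 - ξ s ^ 2) ^ 2 - c ^ 4) / (c ^ 3 * ξ s ^ 2)) r₀ ∧
      -(deriv (deriv fun s => 2 * ((c ^ 2 - ξ s ^ 2) ^ 2 - c ^ 4) / (c ^ 3 * ξ s ^ 2)) r₀)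
        / c < 0 := by
  have hc3 : (c : ℝ) ^ 3 ≠ 0 := pow_ne_zero 3 hc.ne'
  set A := Set.Ico (0 : ℝ) ε with hAdef
  have hU : UniqueDiffOn ℝ A := uniqueDiffOn_Ico 0 ε
  set g1 := derivWithin ξ A with hg1def
  set g2 := derivWithin g1 A with hg2def
  have h0A : (0 : ℝ) ∈ A := ⟨le_refl 0, hε⟩
  have hg1c : ContDiffOn ℝ 1 g1 A := hξ.derivWithin hU (by norm_num)
  have hg1cont : ContinuousWithinAt g1 A 0 := hg1c.continuousOn 0 h0A
  have hg2cont : ContinuousWithinAt g2 A 0 :=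
    ((hg1c.derivWithin (m := 0) hU (by norm_num)).continuousOn) 0 h0A
  have hξcont : ContinuousWithinAt ξ A 0 := hξ.continuousOn 0 h0A
  set L := g1 0 with hLdef
  have hL : 0 < L := h1
  -- the good set is a neighborhood of 0 within A
  have hS : {r | L / 2 < g1 r ∧ |g2 r| < 1 ∧ |ξ r| < L ^ 2 / 8} ∈ nhdsWithin 0 A := by
    have t1 : ∀ᶠ r in nhdsWithin 0 A, L / 2 < g1 r :=
      hg1cont.eventually (eventually_gt_nhds (by linarith))
    have t2 : ∀ᶠ r in nhdsWithin 0 A, |g2 r| < 1 := by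
      have : ∀ᶠ y in 𝓝 (g2 0), |y| < 1 := by
        have : g2 0 = 0 := h2
        rw [this]
        have : {y : ℝ | |y| < 1} ∈ 𝓝 (0 : ℝ) := by
          have := Metric.ball_mem_nhds (0 : ℝ) one_pos
          simpa [Metric.ball, Real.dist_eq] using this
        exact this
      exact hg2cont.eventually this
    have t3 : ∀ᶠ r in nhdsWithin 0 A, |ξ r| < L ^ 2 / 8 := by
      have h8 : (0 : ℝ) < L ^ 2 / 8 := by positivity
      have : ∀ᶠ y in 𝓝 (ξ 0), |y| < L ^ 2 / 8 := by
        rw [h0]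
        have := Metric.ball_mem_nhds (0 : ℝ) h8
        exact (by simpa [Metric.ball, Real.dist_eq] using this : {y : ℝ | |y| < L ^ 2 / 8} ∈ 𝓝 (0 : ℝ))
      exact hξcont.eventually this
    filter_upwards [t1, t2, t3] with r h1' h2' h3'
    exact ⟨h1', h2', h3'⟩
  rw [Metric.mem_nhdsWithin_iff] at hS
  obtain ⟨δ₀, hδ₀, hball⟩ := hS
  refine ⟨min δ₀ ε / 2, by positivity, ?_, ?_⟩
  · have : min δ₀ ε ≤ ε := min_le_right _ _
    linarith
  intro r₀ hr₀
  obtain ⟨hr₀0, hr₀δ⟩ := hr₀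
  have hr₀ε : r₀ < ε := by
    have : min δ₀ ε ≤ ε := min_le_right _ _
    linarith
  have hr₀δ₀ : r₀ < δ₀ := by
    have : min δ₀ ε ≤ δ₀ := min_le_left _ _
    linarith
  have hr₀A : r₀ ∈ A := ⟨hr₀0.le, hr₀ε⟩
  have hr₀S : L / 2 < g1 r₀ ∧ |g2 r₀| < 1 ∧ |ξ r₀| < L ^ 2 / 8 := by
    apply hball
    constructor
    · simp [Metric.ball, Real.dist_eq, abs_of_pos hr₀0, hr₀δ₀]
    · exact hr₀A
  obtain ⟨hg1r, hg2r, hξr⟩ := hr₀S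
  -- setup on the open interval V
  set V := Set.Ioo (0 : ℝ) ε with hVdef
  have hVopen : IsOpen V := isOpen_Ioo
  have hVA : V ⊆ A := Set.Ioo_subset_Ico_self
  have hr₀V : r₀ ∈ V := ⟨hr₀0, hr₀ε⟩
  have hξV : ContDiffOn ℝ 2 ξ V := hξ.mono hVA
  have hANhds : ∀ s ∈ V, A ∈ 𝓝 s := fun s hs =>
    Filter.mem_of_superset (hVopen.mem_nhds hs) hVA
  have hξdiff : ∀ s ∈ V, HasDerivAt ξ (deriv ξ s) s := fun s hs =>
    (((hξV.contDiffAt (hVopen.mem_nhds hs)).differentiableAt (by norm_num)).hasDerivAt)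
  have hderiv_eq_g1 : ∀ s ∈ V, deriv ξ s = g1 s := fun s hs =>
    (derivWithin_of_mem_nhds (hANhds s hs)).symm
  have hdc : ContDiffOn ℝ 1 (deriv ξ) V := hξV.deriv_of_isOpen hVopen (by norm_num)
  -- the functions
  set f : ℝ → ℝ := fun s => 2 * ((c ^ 2 - ξ s ^ 2) ^ 2 - c ^ 4) / (c ^ 3 * ξ s ^ 2) with hfdef
  set g : ℝ → ℝ := fun s => 2 / c ^ 3 * ξ s ^ 2 - 4 / c with hgdef
  set h : ℝ → ℝ := fun s => 4 / c ^ 3 * (ξ s * deriv ξ s) with hhdef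
  have hfg : Set.EqOn f g V := by
    intro s hs
    have hξs : ξ s ≠ 0 := (hpos s hs).ne'
    simp only [hfdef, hgdef]
    field_simp
    ring
  have hgderiv : ∀ s ∈ V, HasDerivAt g (h s) s := by
    intro s hs
    have : HasDerivAt (fun x => 2 / c ^ 3 * ξ x ^ 2 - 4 / c) _ s := (((hξdiff s hs).pow 2).const_mul (2 / c ^ 3)).sub_const (4 / c)
    convert this using 1
    show 4 / c ^ 3 * (ξ s * deriv ξ s) = _
    ring
  have hdf_eq_h : Set.EqOn (deriv f) h V := by
    intro s hs
    have heq : f =ᶠ[𝓝 s] g := Filter.eventuallyEq_of_mem (hVopen.mem_nhds hs) hfg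
    rw [heq.deriv_eq, (hgderiv s hs).deriv]
  have hfg_r₀ : f =ᶠ[𝓝 r₀] g := Filter.eventuallyEq_of_mem (hVopen.mem_nhds hr₀V) hfg
  have hdf_r₀ : deriv f =ᶠ[𝓝 r₀] h := Filter.eventuallyEq_of_mem (hVopen.mem_nhds hr₀V) hdf_eq_h
  -- second derivative of ξ
  have hd2 : HasDerivAt (deriv ξ) (deriv (deriv ξ) r₀) r₀ :=
    (((hdc.differentiableOn one_ne_zero) r₀ hr₀V).differentiableAt
      (hVopen.mem_nhds hr₀V)).hasDerivAt
  have hd2_eq_g2 : deriv (deriv ξ) r₀ = g2 r₀ := by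
    have heq : deriv ξ =ᶠ[𝓝 r₀] g1 :=
      Filter.eventuallyEq_of_mem (hVopen.mem_nhds hr₀V) hderiv_eq_g1
    rw [heq.deriv_eq]
    exact (derivWithin_of_mem_nhds (hANhds r₀ hr₀V)).symm
  have hhderiv : HasDerivAt h
      (4 / c ^ 3 * (deriv ξ r₀ * deriv ξ r₀ + ξ r₀ * deriv (deriv ξ) r₀)) r₀ :=
    ((hξdiff r₀ hr₀V).mul hd2).const_mul (4 / c ^ 3)
  refine ⟨?_, ?_, ?_⟩
  · exact hfg_r₀.differentiableAt_iff.mpr (hgderiv r₀ hr₀V).differentiableAt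
  · exact hdf_r₀.differentiableAt_iff.mpr hhderiv.differentiableAt
  · have key : deriv (deriv f) r₀ =
        4 / c ^ 3 * (g1 r₀ * g1 r₀ + ξ r₀ * g2 r₀) := by
      rw [hdf_r₀.deriv_eq, hhderiv.deriv, hderiv_eq_g1 r₀ hr₀V, hd2_eq_g2]
    rw [key]
    have hb : |ξ r₀ * g2 r₀| < L ^ 2 / 8 := by
      calc |ξ r₀ * g2 r₀| = |ξ r₀| * |g2 r₀| := abs_mul _ _
        _ ≤ |ξ r₀| * 1 := mul_le_mul_of_nonneg_left hg2r.le (abs_nonneg _)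
        _ = |ξ r₀| := mul_one _
        _ < L ^ 2 / 8 := hξr
    have hbb : -(L ^ 2 / 8) < ξ r₀ * g2 r₀ := by
      have := neg_abs_le (ξ r₀ * g2 r₀)
      linarith
    have hg1sq : L ^ 2 / 4 < g1 r₀ * g1 r₀ := by
      have hLhalf : 0 < L / 2 := by linarith
      nlinarith
    have hsum : 0 < g1 r₀ * g1 r₀ + ξ r₀ * g2 r₀ := by nlinarith
    have hval : 0 < 4 / c ^ 3 * (g1 r₀ * g1 r₀ + ξ r₀ * g2 r₀) := by positivity
    exact div_neg_of_neg_of_pos (by linarith) hc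
end
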